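/- arXiv:1312.7564 — 4 statements merged into one kernel-verified Lean document; each statement's English description precedes it below -/
import Mathlib

section
/- Let f(x) = x^n + a_1 x^{n-1} + ⋯ + a_1 x + 1 be a self-reciprocal irreducible monic polynomial over F_{2^k} with Tr(a_1) = 1 (absolute trace over F_2). Then f^Q(x) = x^n f(x + x^{-1}) is a self-reciprocal irreducible monic polynomial of degree 2n, and writing f^Q(x) = x^{2n} + ã_1 x^{2n-1} + ⋯ + ã_1 x + 1, one has Tr(ã_1) = 1. -/
open Polynomial

/-- The Q-transform: `f^Q(x) = x^n · f(x + 1/x)`. -/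
noncomputable def Qt {F : Type*} [Field F] (f : Polynomial F) : Polynomial F :=
  ∑ u ∈ Finset.range (f.natDegree + 1),
    C (f.coeff u) * X ^ (f.natDegree - u) * (X ^ 2 + 1) ^ u

section Helpers

lemma reflect_finset_sum' {R : Type*} [CommSemiring R] (N : ℕ) {ι : Type*} (s : Finset ι)
    (g : ι → R[X]) : (∑ i ∈ s, g i).reflect N = ∑ i ∈ s, (g i).reflect N := by
  classical
  induction s using Finset.induction_on with
  | empty => simp
  | insert a s h ih => rw [Finset.sum_insert h, Finset.sum_insert h, reflect_add, ih]

lemma aeval_reflect {F E : Type*} [Field F] [Field E] [Algebra F E] (p : F[X]) {N : ℕ}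
    (hN : p.natDegree ≤ N) {x : E} (hx : x ≠ 0) :
    aeval x (p.reflect N) = x ^ N * aeval x⁻¹ p := by
  conv_lhs => rw [p.as_sum_range' (N+1) (Nat.lt_succ_of_le hN)]
  conv_rhs => rw [p.as_sum_range' (N+1) (Nat.lt_succ_of_le hN)]
  rw [reflect_finset_sum', map_sum, map_sum, Finset.mul_sum]
  refine Finset.sum_congr rfl fun i hi => ?_
  rw [Finset.mem_range, Nat.lt_succ_iff] at hi
  rw [← C_mul_X_pow_eq_monomial, reflect_C_mul_X_pow, revAt_le hi]
  simp only [map_mul, aeval_C, map_pow, aeval_X]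
  rw [pow_sub₀ x hx hi, ← inv_pow]
  ring

lemma aeval_inv_root {F E : Type*} [Field F] [Field E] [Algebra F E] {f : F[X]} {n : ℕ}
    (hdeg : f.natDegree = n) (hsr : f.reflect n = f) {x : E} (hx : x ≠ 0)
    (hroot : aeval x f = 0) : aeval x⁻¹ f = 0 := by
  have h := aeval_reflect f (le_of_eq hdeg) hx
  rw [hsr, hroot] at h
  have hxn : x ^ n ≠ 0 := pow_ne_zero _ hx
  exact (mul_eq_zero.mp h.symm).resolve_left hxn

lemma reflect_X_add_one_pow (F : Type*) [Field F] (m : ℕ) :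
    ((X + 1 : F[X]) ^ m).reflect m = (X + 1) ^ m := by
  have h1 : (X + 1 : F[X]).reflect 1 = X + 1 := by
    rw [show (X + 1 : F[X]) = C 1 * X ^ 1 + C 1 * X ^ 0 by simp]
    rw [reflect_add, reflect_C_mul_X_pow, reflect_C_mul_X_pow,
      revAt_le (le_refl 1), revAt_le (Nat.zero_le 1)]
    simp [add_comm]
  have hdeg : (X + 1 : F[X]).natDegree = 1 := by
    rw [show (1 : F[X]) = C 1 by simp, natDegree_X_add_C]
  induction m with
  | zero => simp
  | succ m ih =>
    rw [pow_succ,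
      reflect_mul _ _ (by rw [natDegree_pow, hdeg, mul_one]) (le_of_eq hdeg), ih, h1]

lemma trace_sq {E : Type*} [Field E] [Finite E] [CharP E 2] [Algebra (ZMod 2) E] (z : E) :
    Algebra.trace (ZMod 2) E (z ^ 2) = Algebra.trace (ZMod 2) E z := by
  have hbij : Function.Bijective (frobenius E 2) :=
    Finite.injective_iff_bijective.mp (frobenius E 2).injective
  let e : E ≃+* E := RingEquiv.ofBijective (frobenius E 2) hbij
  have key : ∀ c : ZMod 2, c ^ 2 = c := by decide
  let σ : E ≃ₐ[ZMod 2] E := AlgEquiv.ofRingEquiv (f := e) (fun c => by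
    show frobenius E 2 (algebraMap (ZMod 2) E c) = algebraMap (ZMod 2) E c
    rw [frobenius_def, ← map_pow, key])
  have hσ : ∀ w : E, σ w = w ^ 2 := fun w => rfl
  have hconj : σ.toLinearEquiv.conj (Algebra.lmul (ZMod 2) E z)
      = Algebra.lmul (ZMod 2) E (z ^ 2) := by
    ext w
    simp only [LinearEquiv.conj_apply, LinearMap.coe_comp, Function.comp_apply,
      LinearEquiv.coe_coe, AlgEquiv.toLinearEquiv_apply]
    rw [show σ.toLinearEquiv.symm w = σ.symm w from rfl, hσ]
    show (z * σ.symm w) ^ 2 = z ^ 2 * w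
    rw [mul_pow, show (σ.symm w : E) ^ 2 = σ (σ.symm w) from rfl, AlgEquiv.apply_symm_apply]
  rw [Algebra.trace_apply, Algebra.trace_apply, ← hconj, LinearMap.trace_conj']

lemma trace_AS {E : Type*} [Field E] [Finite E] [CharP E 2] [Algebra (ZMod 2) E]
    {y c : E} (h : y ^ 2 + y = c) : Algebra.trace (ZMod 2) E c = 0 := by
  rw [← h, map_add, trace_sq]
  exact CharTwo.add_self_eq_zero _

lemma natDegree_X_add_one' {F : Type*} [Field F] : (X + 1 : F[X]).natDegree = 1 := by
  rw [show (1 : F[X]) = C 1 by simp, natDegree_X_add_C]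

lemma monic_X_add_one' {F : Type*} [Field F] : (X + 1 : F[X]).Monic := by
  rw [show (1 : F[X]) = C 1 by simp]; exact monic_X_add_C 1

lemma term_natDegree_le {F : Type*} [Field F] (a : F) (i j : ℕ) :
    (C a * X ^ i * (X + 1) ^ j).natDegree ≤ i + j :=
  le_trans natDegree_mul_le (add_le_add
    (le_trans (natDegree_C_mul_le _ _) (natDegree_X_pow i).le)
    (by rw [natDegree_pow, natDegree_X_add_one', mul_one]))

section QtLemmas

variable {F : Type*} [Field F] [CharP F 2] {f : F[X]} {n : ℕ}

lemma Qt_eq (f : F[X]) [CharP F 2] :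
    Qt f = ∑ u ∈ Finset.range (f.natDegree + 1),
      C (f.coeff u) * X ^ (f.natDegree - u) * (X + 1) ^ (2 * u) := by
  unfold Qt
  refine Finset.sum_congr rfl fun u _ => ?_
  have h2 : (2 : F[X]) = 0 := by exact_mod_cast CharP.cast_eq_zero F[X] 2
  have hsq : (X ^ 2 + 1 : F[X]) = (X + 1) ^ 2 := by rw [add_sq, h2]; ring
  rw [hsq, ← pow_mul]

lemma Qt_split (hdeg : f.natDegree = n) (hmonic : f.Monic) :
    Qt f = (∑ u ∈ Finset.range n, C (f.coeff u) * X ^ (n - u) * (X + 1) ^ (2 * u))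
      + (X + 1) ^ (2 * n) := by
  rw [Qt_eq, hdeg, Finset.sum_range_succ, Nat.sub_self, pow_zero, mul_one,
    show f.coeff n = 1 by rw [← hdeg]; exact hmonic.coeff_natDegree, map_one, one_mul]

lemma Qt_tail_deg (hn : 1 ≤ n) :
    (∑ u ∈ Finset.range n, C (f.coeff u) * X ^ (n - u) * (X + 1) ^ (2 * u)).degree
      < ((2 * n : ℕ) : WithBot ℕ) := by
  refine lt_of_le_of_lt (degree_sum_le _ _) ?_
  rw [Finset.sup_lt_iff (WithBot.bot_lt_coe _)]
  intro u hu
  rw [Finset.mem_range] at hu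
  refine lt_of_le_of_lt (degree_le_natDegree) ?_
  have h1 : (C (f.coeff u) * X ^ (n - u) * (X + 1) ^ (2 * u)).natDegree ≤ (n - u) + 2 * u :=
    term_natDegree_le _ _ _
  exact_mod_cast lt_of_le_of_lt (Nat.cast_le.mpr h1)
    (Nat.cast_lt.mpr (by omega : (n - u) + 2 * u < 2 * n))

lemma Qt_top_deg (hn : 1 ≤ n) : ((X + 1 : F[X]) ^ (2 * n)).degree = ((2 * n : ℕ) : WithBot ℕ) := by
  rw [degree_eq_natDegree ((monic_X_add_one'.pow _).ne_zero), natDegree_pow,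
    natDegree_X_add_one', mul_one]

lemma Qt_monic (hdeg : f.natDegree = n) (hmonic : f.Monic) (hn : 1 ≤ n) : (Qt f).Monic := by
  rw [Qt_split hdeg hmonic]
  exact Monic.add_of_right (monic_X_add_one'.pow _) (by rw [Qt_top_deg hn]; exact Qt_tail_deg hn)

lemma Qt_natDegree (hdeg : f.natDegree = n) (hmonic : f.Monic) (hn : 1 ≤ n) :
    (Qt f).natDegree = 2 * n := by
  apply natDegree_eq_of_degree_eq_some
  rw [Qt_split hdeg hmonic,
    degree_add_eq_right_of_degree_lt (by rw [Qt_top_deg hn]; exact Qt_tail_deg hn),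
    Qt_top_deg hn]

lemma Qt_reflect (hdeg : f.natDegree = n) : (Qt f).reflect (2 * n) = Qt f := by
  rw [Qt_eq, hdeg, reflect_finset_sum']
  refine Finset.sum_congr rfl fun u hu => ?_
  rw [Finset.mem_range, Nat.lt_succ_iff] at hu
  rw [show 2 * n = 2 * (n - u) + 2 * u by omega]
  rw [reflect_mul _ _
    (le_trans (natDegree_C_mul_le _ _) (by rw [natDegree_X_pow]; omega))
    (by rw [natDegree_pow, natDegree_X_add_one', mul_one]),
    reflect_C_mul_X_pow, revAt_le (by omega), reflect_X_add_one_pow]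
  have : 2 * (n - u) - (n - u) = n - u := by omega
  rw [this]

lemma Qt_coeff (hdeg : f.natDegree = n) (hn : 1 ≤ n) :
    (Qt f).coeff (2 * n - 1) = f.coeff (n - 1) := by
  obtain ⟨m, rfl⟩ : ∃ m, n = m + 1 := ⟨n - 1, by omega⟩
  rw [Qt_eq, hdeg, show m + 1 + 1 = m + 2 from rfl, Finset.sum_range_succ, Finset.sum_range_succ,
    show 2 * (m + 1) - 1 = 2 * m + 1 by omega, coeff_add, coeff_add]
  have hS : (∑ u ∈ Finset.range m,
      C (f.coeff u) * X ^ (m + 1 - u) * (X + 1) ^ (2 * u)).coeff (2 * m + 1) = 0 := by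
    rw [finset_sum_coeff]
    refine Finset.sum_eq_zero fun u hu => ?_
    rw [Finset.mem_range] at hu
    exact coeff_eq_zero_of_natDegree_lt
      (lt_of_le_of_lt (term_natDegree_le _ _ _) (by omega))
  have ht1 : (C (f.coeff m) * X ^ (m + 1 - m) * (X + 1) ^ (2 * m)).coeff (2 * m + 1)
      = f.coeff m := by
    rw [show m + 1 - m = 1 by omega, pow_one, mul_assoc, coeff_C_mul, coeff_X_mul,
      coeff_X_add_one_pow, Nat.choose_self, Nat.cast_one, mul_one]
  have ht2 : (C (f.coeff (m + 1)) * X ^ (m + 1 - (m + 1)) * (X + 1) ^ (2 * (m + 1))).coeff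
      (2 * m + 1) = 0 := by
    rw [Nat.sub_self, pow_zero, mul_one, coeff_C_mul, coeff_X_add_one_pow,
      show 2 * (m + 1) = (2 * m + 1) + 1 by omega, Nat.choose_succ_self_right]
    have h0 : ((2 * m + 1 + 1 : ℕ) : F) = 0 :=
      (CharP.cast_eq_zero_iff F 2 (2 * m + 1 + 1)).mpr ⟨m + 1, by omega⟩
    rw [h0, mul_zero]
  rw [hS, ht1, ht2, zero_add, add_zero]
  norm_num

end QtLemmas
end Helpers

open IntermediateField in
lemma meyn_aux {F L : Type*} [Field F] [Fintype F] [Algebra (ZMod 2) F] [Field L] [Algebra F L]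
    [FiniteDimensional F L]
    {f : F[X]} {n : ℕ} (hn : 1 ≤ n) (hdeg : f.natDegree = n) (hmonic : f.Monic)
    (hirr : Irreducible f) (hselfrec : f.reflect n = f)
    (htr : Algebra.trace (ZMod 2) F (f.coeff (n - 1)) = 1)
    (hLle : Module.finrank F L ≤ 2 * n)
    (b y : L) (hbroot : aeval b f = 0) (hb0 : b ≠ 0)
    (hquad : y ^ 2 + b * y + 1 = 0) :
    2 * n ≤ Module.finrank F L := by
  classical
  haveI hchar : CharP F 2 := charP_of_injective_ringHom (algebraMap (ZMod 2) F).injective 2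
  haveI : CharP L 2 := charP_of_injective_ringHom (algebraMap F L).injective 2
  have hbi_root : aeval b⁻¹ f = 0 := aeval_inv_root hdeg hselfrec hb0 hbroot
  have hbi0 : b⁻¹ ≠ 0 := inv_ne_zero hb0
  have hint_bi : IsIntegral F (b⁻¹) := ⟨f, hmonic, by rw [← aeval_def]; exact hbi_root⟩
  haveI hKfd : FiniteDimensional F F⟮b⁻¹⟯ := adjoin.finiteDimensional hint_bi
  have hminbi : minpoly F (b⁻¹) = f :=
    (minpoly.eq_of_irreducible_of_monic hirr hbi_root hmonic).symm
  have hrankK : Module.finrank F F⟮b⁻¹⟯ = n := by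
    rw [adjoin.finrank hint_bi, hminbi, hdeg]
  set g : F⟮b⁻¹⟯ := AdjoinSimple.gen F (b⁻¹) with hgdef
  have htrg : Algebra.trace F F⟮b⁻¹⟯ g = f.coeff (n - 1) := by
    have h := PowerBasis.trace_gen_eq_nextCoeff_minpoly (adjoin.powerBasis hint_bi)
    rw [adjoin.powerBasis_gen, minpoly_gen, hminbi] at h
    rw [hgdef, h, nextCoeff_of_natDegree_pos (by rw [hdeg]; omega), hdeg]
    exact CharTwo.neg_eq _
  haveI : CharP F⟮b⁻¹⟯ 2 :=
    charP_of_injective_ringHom (algebraMap F F⟮b⁻¹⟯).injective 2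
  haveI : FiniteDimensional F⟮b⁻¹⟯ L := FiniteDimensional.right F F⟮b⁻¹⟯ L
  have htower : Module.finrank F F⟮b⁻¹⟯ * Module.finrank F⟮b⁻¹⟯ L
      = Module.finrank F L := Module.finrank_mul_finrank F F⟮b⁻¹⟯ L
  have hmpos : 0 < Module.finrank F⟮b⁻¹⟯ L := Module.finrank_pos
  have hmle : Module.finrank F⟮b⁻¹⟯ L ≤ 2 := by
    refine Nat.le_of_mul_le_mul_left ?_ (by omega : 0 < n)
    calc n * Module.finrank F⟮b⁻¹⟯ L = Module.finrank F L := by rw [← htower, hrankK]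
      _ ≤ 2 * n := hLle
      _ = n * 2 := by ring
  rcases (by omega : Module.finrank F⟮b⁻¹⟯ L = 1 ∨ Module.finrank F⟮b⁻¹⟯ L = 2)
    with hm1 | hm2
  · -- impossible: would give an Artin–Schreier solution
    exfalso
    have hKtop : F⟮b⁻¹⟯ = (⊤ : IntermediateField F L) := by
      refine IntermediateField.eq_of_le_of_finrank_eq le_top ?_
      rw [IntermediateField.finrank_top']
      rw [hrankK, ← htower, hrankK, hm1, mul_one]
    have hyK : y ∈ F⟮b⁻¹⟯ := by rw [hKtop]; trivial
    set yK : F⟮b⁻¹⟯ := ⟨y, hyK⟩ with hydef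
    have hg0 : g ≠ 0 := by
      rw [hgdef]
      intro h
      apply hbi0
      simpa using congrArg Subtype.val h
    have hginvcoe : ((g⁻¹ : F⟮b⁻¹⟯) : L) = b := by
      rw [IntermediateField.coe_inv]
      show ((b⁻¹ : L))⁻¹ = b
      rw [inv_inv]
    have hyco : (yK : L) = y := rfl
    have hquadK : yK ^ 2 + g⁻¹ * yK + 1 = 0 := by
      apply Subtype.val_injective
      push_cast [hginvcoe, hyco]
      exact hquad
    have hsolve : (yK * g) ^ 2 + (yK * g) = g ^ 2 := by
      have h0 : (yK * g) ^ 2 + (yK * g) + g ^ 2 = (yK ^ 2 + g⁻¹ * yK + 1) * g ^ 2 := by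
        field_simp
      rw [hquadK, zero_mul] at h0
      have h1 := eq_neg_of_add_eq_zero_left h0
      rwa [CharTwo.neg_eq] at h1
    letI aK : Algebra (ZMod 2) F⟮b⁻¹⟯ :=
      ((algebraMap F F⟮b⁻¹⟯).comp (algebraMap (ZMod 2) F)).toAlgebra
    haveI : IsScalarTower (ZMod 2) F F⟮b⁻¹⟯ := IsScalarTower.of_algebraMap_eq'
      (rfl : algebraMap (ZMod 2) F⟮b⁻¹⟯
        = (algebraMap F F⟮b⁻¹⟯).comp (algebraMap (ZMod 2) F))
    haveI : Finite F⟮b⁻¹⟯ := Module.finite_of_finite F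
    have htrK : Algebra.trace (ZMod 2) F⟮b⁻¹⟯ (g ^ 2) = 1 := by
      rw [trace_sq, ← Algebra.trace_trace (S := F), htrg, htr]
    have h0tr := trace_AS hsolve
    rw [htrK] at h0tr
    exact one_ne_zero h0tr
  · rw [← htower, hrankK, hm2]
    omega

open IntermediateField in
/-- Meyn's theorem: the Q-transform of a self-reciprocal irreducible monic polynomial
over `F_{2^k}` whose subleading coefficient `a₁` has absolute trace 1 is again a
self-reciprocal irreducible monic polynomial whose subleading coefficient has trace 1. -/
theorem stmt_3 {F : Type*} [Field F] [Fintype F] [Algebra (ZMod 2) F] (k : ℕ) (hk : 1 ≤ k)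
    (hcard : Fintype.card F = 2 ^ k) (f : Polynomial F) (n : ℕ) (hn : 1 ≤ n)
    (hdeg : f.natDegree = n) (hmonic : f.Monic) (hirr : Irreducible f)
    (hselfrec : f.reflect n = f)
    (htr : Algebra.trace (ZMod 2) F (f.coeff (n - 1)) = 1) :
    (Qt f).Monic ∧ Irreducible (Qt f) ∧ (Qt f).natDegree = 2 * n ∧
      (Qt f).reflect (2 * n) = Qt f ∧
      Algebra.trace (ZMod 2) F ((Qt f).coeff (2 * n - 1)) = 1 := by
  classical
  haveI hchar : CharP F 2 := charP_of_injective_ringHom (algebraMap (ZMod 2) F).injective 2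
  have hQm : (Qt f).Monic := Qt_monic hdeg hmonic hn
  have hQdeg : (Qt f).natDegree = 2 * n := Qt_natDegree hdeg hmonic hn
  have hQrefl : (Qt f).reflect (2 * n) = Qt f := Qt_reflect hdeg
  have hQcoeff : (Qt f).coeff (2 * n - 1) = f.coeff (n - 1) := Qt_coeff hdeg hn
  refine ⟨hQm, ?_, hQdeg, hQrefl, by rw [hQcoeff]; exact htr⟩
  haveI : CharP (AlgebraicClosure F) 2 :=
    charP_of_injective_ringHom (algebraMap F (AlgebraicClosure F)).injective 2
  have hfne : f ≠ 0 := hmonic.ne_zero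
  have hfc0 : f.coeff 0 = 1 := by
    conv_lhs => rw [← hselfrec]
    rw [coeff_reflect, revAt_le (Nat.zero_le n), Nat.sub_zero, ← hdeg]
    exact hmonic.coeff_natDegree
  obtain ⟨β, hβ⟩ := IsAlgClosed.exists_root (f.map (algebraMap F (AlgebraicClosure F))) (by
    rw [degree_map, degree_eq_natDegree hfne, hdeg]
    exact_mod_cast (by omega : n ≠ 0))
  have hβroot : aeval β f = 0 := by rwa [IsRoot.def, eval_map, ← aeval_def] at hβ
  have hβ0 : β ≠ 0 := by
    intro h
    rw [h, aeval_def, eval₂_at_zero, hfc0, map_one] at hβroot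
    exact one_ne_zero hβroot
  -- a root α of X^2 + βX + 1
  have hlt : (C β * X + 1 : (AlgebraicClosure F)[X]).degree
      < (X ^ 2 : (AlgebraicClosure F)[X]).degree := by
    rw [degree_X_pow]
    refine lt_of_le_of_lt (degree_add_le _ _) ?_
    refine max_lt (lt_of_le_of_lt (degree_C_mul_X_le β) ?_) (lt_of_le_of_lt degree_one_le ?_)
    · exact_mod_cast (by norm_num : (1 : ℕ) < 2)
    · exact_mod_cast (by norm_num : (0 : ℕ) < 2)
  have hqdeg : (X ^ 2 + (C β * X + 1) : (AlgebraicClosure F)[X]).degree = 2 := by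
    rw [degree_add_eq_left_of_degree_lt hlt, degree_X_pow]
    norm_cast
  obtain ⟨α, hαr⟩ := IsAlgClosed.exists_root _ (by rw [hqdeg]; exact (by norm_num))
  have hαq : α ^ 2 + β * α + 1 = 0 := by
    have h := hαr
    simp only [IsRoot.def, eval_add, eval_pow, eval_mul, eval_X, eval_C, eval_one] at h
    rw [← add_assoc] at h
    exact h
  have hα0 : α ≠ 0 := by intro h; rw [h] at hαq; simp at hαq
  have hβαmul : β * α = α ^ 2 + 1 := by
    have h2 : β * α + (α ^ 2 + 1) = 0 := by linear_combination hαq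
    have h3 := eq_neg_of_add_eq_zero_left h2
    rwa [CharTwo.neg_eq] at h3
  have hβα : β = α + α⁻¹ := by
    field_simp
    linear_combination hβαmul
  -- α is a root of Qt f
  have hQα : aeval α (Qt f) = 0 := by
    rw [Qt_eq f, hdeg, map_sum]
    have hexp : ∀ u ∈ Finset.range (n + 1),
        aeval α (C (f.coeff u) * X ^ (n - u) * (X + 1) ^ (2 * u))
          = algebraMap F (AlgebraicClosure F) (f.coeff u) * β ^ u * α ^ n := by
      intro u hu
      rw [Finset.mem_range, Nat.lt_succ_iff] at hu
      simp only [map_mul, aeval_C, map_pow, aeval_X, map_add, map_one]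
      have h2 : (2 : AlgebraicClosure F) = 0 := by
        exact_mod_cast CharP.cast_eq_zero (AlgebraicClosure F) 2
      have hsq : (α + 1) ^ 2 = α ^ 2 + 1 := by rw [add_sq, h2]; ring
      have hpow : (α + 1) ^ (2 * u) = (β * α) ^ u := by rw [pow_mul, hsq, ← hβαmul]
      have hα' : α ^ (n - u) * α ^ u = α ^ n := by rw [← pow_add]; congr 1; omega
      rw [hpow, mul_pow, show algebraMap F (AlgebraicClosure F) (f.coeff u) * α ^ (n - u)
        * (β ^ u * α ^ u) = algebraMap F (AlgebraicClosure F) (f.coeff u) * β ^ u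
        * (α ^ (n - u) * α ^ u) by ring, hα']
    rw [Finset.sum_congr rfl hexp]
    have hsum : (∑ u ∈ Finset.range (n + 1),
        algebraMap F (AlgebraicClosure F) (f.coeff u) * β ^ u) = aeval β f := by
      conv_rhs => rw [f.as_sum_range' (n + 1) (by omega)]
      rw [map_sum]
      refine Finset.sum_congr rfl fun u _ => ?_
      rw [← C_mul_X_pow_eq_monomial, map_mul, aeval_C, map_pow, aeval_X]
    calc ∑ u ∈ Finset.range (n + 1),
          algebraMap F (AlgebraicClosure F) (f.coeff u) * β ^ u * α ^ n
        = (∑ u ∈ Finset.range (n + 1),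
            algebraMap F (AlgebraicClosure F) (f.coeff u) * β ^ u) * α ^ n := by
          rw [Finset.sum_mul]
      _ = 0 := by rw [hsum, hβroot, zero_mul]
  have hintα : IsIntegral F α := ⟨Qt f, hQm, by rw [← aeval_def]; exact hQα⟩
  haveI hLfd : FiniteDimensional F F⟮α⟯ := adjoin.finiteDimensional hintα
  have hβmem : β ∈ F⟮α⟯ := by
    rw [hβα]
    exact add_mem (mem_adjoin_simple_self F α) (inv_mem (mem_adjoin_simple_self F α))
  set βL : F⟮α⟯ := ⟨β, hβmem⟩ with hβLdef
  have hβLcoe : algebraMap F⟮α⟯ (AlgebraicClosure F) βL = β := rfl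
  have hβLroot : aeval βL f = 0 := by
    have h := aeval_algebraMap_apply (AlgebraicClosure F) βL f
    rw [hβLcoe, hβroot] at h
    exact (map_eq_zero_iff _ (algebraMap F⟮α⟯ (AlgebraicClosure F)).injective).mp h.symm
  have hβL0 : βL ≠ 0 := fun h => hβ0 (by rw [← hβLcoe, h, map_zero])
  set αL : F⟮α⟯ := AdjoinSimple.gen F α with hαLdef
  have hαLcoe : algebraMap F⟮α⟯ (AlgebraicClosure F) αL = α := AdjoinSimple.algebraMap_gen F α
  have hquadL : αL ^ 2 + βL * αL + 1 = 0 := by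
    apply Subtype.val_injective
    have h1 : (αL : AlgebraicClosure F) = α := rfl
    have h2 : (βL : AlgebraicClosure F) = β := rfl
    push_cast [h1, h2]
    exact hαq
  have hrankL : Module.finrank F F⟮α⟯ = (minpoly F α).natDegree := adjoin.finrank hintα
  have hdvd : minpoly F α ∣ Qt f := minpoly.dvd F α hQα
  have hdle : (minpoly F α).natDegree ≤ 2 * n := by
    rw [← hQdeg]; exact natDegree_le_of_dvd hdvd hQm.ne_zero
  have hge := meyn_aux hn hdeg hmonic hirr hselfrec htr
    (by rw [hrankL]; exact hdle) βL αL hβLroot hβL0 hquadL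
  have hdeq : (minpoly F α).natDegree = 2 * n := by
    rw [← hrankL]
    exact le_antisymm (by rw [hrankL]; exact hdle) hge
  obtain ⟨c, hc⟩ := hdvd
  have hmne : minpoly F α ≠ 0 := minpoly.ne_zero hintα
  have hcne : c ≠ 0 := by rintro rfl; rw [mul_zero] at hc; exact hQm.ne_zero hc
  have hdeg' : (Qt f).natDegree = (minpoly F α).natDegree + c.natDegree := by
    rw [hc, natDegree_mul hmne hcne]
  have hcdeg : c.natDegree = 0 := by omega
  have hceq : c = C (c.coeff 0) := eq_C_of_natDegree_eq_zero hcdeg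
  have hlc : c.coeff 0 = 1 := by
    have h1 : (Qt f).leadingCoeff = 1 := hQm
    rw [hc, leadingCoeff_mul, (minpoly.monic hintα).leadingCoeff, one_mul, hceq,
      leadingCoeff_C] at h1
    exact h1
  have hQeq : Qt f = minpoly F α := by rw [hc, hceq, hlc, map_one, mul_one]
  rw [hQeq]
  exact minpoly.irreducible hintα
end

section
/- Let f be an irreducible monic polynomial of degree n over F_{2^s} and α ∈ F_{2^s}*. Then either f^{(Q,α)} is irreducible monic of degree 2n over F_{2^s}, or f^{(Q,α)} is the product of two irreducible monic polynomials of degree n over F_{2^s}. -/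
open Polynomial IntermediateField

noncomputable def Qtrans {F : Type*} [Field F] (f : Polynomial F) (α : F) : Polynomial F :=
  ∑ u ∈ Finset.range (f.natDegree + 1),
    C (f.coeff u) * X ^ (f.natDegree - u) * (X ^ 2 + C α) ^ u

section Aux
set_option synthInstance.maxHeartbeats 400000
variable {F : Type*} [Field F]

lemma qtrans_split (f : Polynomial F) (hm : f.Monic) (α : F) :
    Qtrans f α = (∑ u ∈ Finset.range f.natDegree,
      C (f.coeff u) * X ^ (f.natDegree - u) * (X ^ 2 + C α) ^ u) + (X ^ 2 + C α) ^ f.natDegree := by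
  rw [Qtrans, Finset.sum_range_succ, hm.coeff_natDegree]
  simp

lemma qtrans_low_degree (f : Polynomial F) (α : F) :
    (∑ u ∈ Finset.range f.natDegree,
      C (f.coeff u) * X ^ (f.natDegree - u) * (X ^ 2 + C α) ^ u).degree
      < ((X ^ 2 + C α) ^ f.natDegree : Polynomial F).degree := by
  have hXa : (X ^ 2 + C α : Polynomial F).degree = 2 := by
    simpa using degree_X_pow_add_C (n := 2) (by norm_num) α
  have hpd : ((X ^ 2 + C α) ^ f.natDegree : Polynomial F).degree = (2 * f.natDegree : ℕ) := by
    rw [degree_pow, hXa]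
    simp [mul_comm]
  rw [hpd]
  refine lt_of_le_of_lt (degree_sum_le _ _) ?_
  rw [Finset.sup_lt_iff (by exact_mod_cast WithBot.bot_lt_coe _)]
  intro u hu
  have hun : u < f.natDegree := Finset.mem_range.mp hu
  have h1 : (C (f.coeff u) * X ^ (f.natDegree - u) * (X ^ 2 + C α) ^ u).degree
      ≤ ((f.natDegree - u : ℕ) : WithBot ℕ) + ((2 * u : ℕ) : WithBot ℕ) := by
    refine le_trans (degree_mul_le _ _) (add_le_add (degree_C_mul_X_pow_le _ _) ?_)
    rw [degree_pow, hXa]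
    simp [mul_comm]
  refine lt_of_le_of_lt h1 ?_
  rw [← Nat.cast_add, Nat.cast_lt]
  omega

lemma qtrans_monic (f : Polynomial F) (hm : f.Monic) (α : F) : (Qtrans f α).Monic := by
  rw [qtrans_split f hm α]
  exact Monic.add_of_right ((monic_X_pow_add_C (a := α) (by norm_num)).pow _)
    (qtrans_low_degree f α)

lemma qtrans_natDegree (f : Polynomial F) (hm : f.Monic) (α : F) :
    (Qtrans f α).natDegree = 2 * f.natDegree := by
  rw [qtrans_split f hm α, natDegree_add_eq_right_of_degree_lt (qtrans_low_degree f α),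
    natDegree_pow]
  have : (X ^ 2 + C α : Polynomial F).natDegree = 2 := by
    simpa using natDegree_X_pow_add_C (n := 2) (a := α)
  rw [this, mul_comm]

lemma qtrans_coeff_zero (f : Polynomial F) (hm : f.Monic) (α : F) :
    (Qtrans f α).coeff 0 = α ^ f.natDegree := by
  rw [coeff_zero_eq_eval_zero, Qtrans, eval_finset_sum]
  rw [Finset.sum_eq_single f.natDegree]
  · simp [hm.coeff_natDegree]
  · intro u hu hne
    have : u < f.natDegree := by
      have := Finset.mem_range.mp hu; omega
    have h0 : f.natDegree - u ≠ 0 := by omega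
    simp [zero_pow h0]
  · intro h; simp at h

/-- Key lemma: any irreducible factor of `Qtrans f α` has degree `n` or `2n`. -/
lemma qtrans_factor_degree {n : ℕ} (hn : 1 ≤ n) {f : Polynomial F}
    (hdeg : f.natDegree = n) (hmonic : f.Monic) (hirr : Irreducible f)
    {α : F} (hα : α ≠ 0) {g : Polynomial F} (hg : Irreducible g)
    (hdvd : g ∣ Qtrans f α) : g.natDegree = n ∨ g.natDegree = 2 * n := by
  haveI : Fact (Irreducible g) := ⟨hg⟩
  set K := AdjoinRoot g with hK
  set x : K := AdjoinRoot.root g with hx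
  have hfinK : FiniteDimensional F K := (AdjoinRoot.powerBasis hg.ne_zero).finite
  have hQx : Polynomial.aeval x (Qtrans f α) = 0 := by
    rw [AdjoinRoot.aeval_eq, AdjoinRoot.mk_eq_zero]; exact hdvd
  have hxne : x ≠ 0 := by
    intro h0
    rw [h0] at hQx
    have : Polynomial.aeval (0 : K) (Qtrans f α) = algebraMap F K ((Qtrans f α).coeff 0) := by
      rw [Polynomial.aeval_def, eval₂_at_zero]
    rw [this, qtrans_coeff_zero f hmonic α] at hQx
    exact pow_ne_zero _ hα ((_root_.map_eq_zero (algebraMap F K)).mp hQx)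
  set β : K := x + algebraMap F K α * x⁻¹ with hβdef
  have hxb : x * β = x ^ 2 + algebraMap F K α := by
    rw [hβdef, mul_add, mul_left_comm, mul_inv_cancel₀ hxne, mul_one, sq]
  -- aeval β f = 0
  have hβf : Polynomial.aeval β f = 0 := by
    have h2 : Polynomial.aeval x (Qtrans f α)
        = ∑ u ∈ Finset.range (n + 1),
          algebraMap F K (f.coeff u) * x ^ (n - u) * (x ^ 2 + algebraMap F K α) ^ u := by
      rw [Qtrans, map_sum, hdeg]
      refine Finset.sum_congr rfl fun u _ => ?_
      simp
    have h3 : ∀ u ∈ Finset.range (n + 1),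
        algebraMap F K (f.coeff u) * x ^ (n - u) * (x ^ 2 + algebraMap F K α) ^ u
          = x ^ n * (f.coeff u • β ^ u) := by
      intro u hu
      have hun : u ≤ n := Nat.lt_succ_iff.mp (Finset.mem_range.mp hu)
      have e1 : (x ^ 2 + algebraMap F K α) ^ u = x ^ u * β ^ u := by
        rw [← hxb, mul_pow]
      have e2 : x ^ (n - u) * x ^ u = x ^ n := by
        rw [← pow_add, Nat.sub_add_cancel hun]
      rw [e1, Algebra.smul_def]
      calc algebraMap F K (f.coeff u) * x ^ (n - u) * (x ^ u * β ^ u)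
          = (x ^ (n - u) * x ^ u) * (algebraMap F K (f.coeff u) * β ^ u) := by ring
        _ = x ^ n * (algebraMap F K (f.coeff u) * β ^ u) := by rw [e2]
    have h4 : x ^ n * Polynomial.aeval β f = 0 := by
      rw [Polynomial.aeval_eq_sum_range (p := f) β, hdeg, Finset.mul_sum,
        ← Finset.sum_congr rfl h3, ← h2, hQx]
    rcases mul_eq_zero.mp h4 with h | h
    · exact absurd h (pow_ne_zero n hxne)
    · exact h
  have hmin : minpoly F β = f := (minpoly.eq_of_irreducible_of_monic hirr hβf hmonic).symm
  -- the intermediate field E = F(β)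
  set E : IntermediateField F K := F⟮β⟯ with hE
  have hβint : IsIntegral F β := IsIntegral.of_finite F β
  have hEfin : Module.finrank F E = n := by
    rw [hE, IntermediateField.adjoin.finrank hβint, hmin, hdeg]
  haveI : FiniteDimensional E K := FiniteDimensional.right F E K
  -- x satisfies a quadratic over E
  have hq : Module.finrank E K ≤ 2 := by
    set b : E := IntermediateField.AdjoinSimple.gen F β with hb
    set q : Polynomial E := X ^ 2 - C b * X + C (algebraMap F E α) with hqdef
    have hbmap : algebraMap E K b = β := IntermediateField.AdjoinSimple.algebraMap_gen F β
    have haq : Polynomial.aeval x q = 0 := by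
      rw [hqdef]
      simp only [map_add, map_sub, map_mul, map_pow, Polynomial.aeval_X, Polynomial.aeval_C]
      rw [hbmap, ← IsScalarTower.algebraMap_apply F E K]
      have : β * x = x ^ 2 + algebraMap F K α := by rw [mul_comm]; exact hxb
      rw [this]; ring
    have hqmonic : q.Monic := by
      rw [hqdef, sub_eq_add_neg, add_assoc]
      refine monic_X_pow_add ?_
      refine lt_of_le_of_lt (degree_add_le _ _) ?_
      rw [max_lt_iff, degree_neg]
      refine ⟨lt_of_le_of_lt (degree_mul_le _ _) ?_,
        lt_of_le_of_lt degree_C_le (by norm_num)⟩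
      calc degree (C b) + degree (X : Polynomial E) ≤ 0 + 1 :=
            add_le_add degree_C_le degree_X_le
        _ < 2 := by norm_num
    have hdvdq : minpoly E x ∣ q := minpoly.dvd E x haq
    have hdeg2 : (minpoly E x).natDegree ≤ 2 := by
      refine le_trans (natDegree_le_of_dvd hdvdq hqmonic.ne_zero) ?_
      have : q.natDegree ≤ 2 := by
        rw [hqdef, sub_eq_add_neg, add_assoc]
        refine le_trans (natDegree_add_le _ _) ?_
        simp only [natDegree_X_pow, max_le_iff]
        refine ⟨le_refl 2, le_trans (natDegree_add_le _ _) ?_⟩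
        simp only [natDegree_neg, max_le_iff]
        exact ⟨le_trans (natDegree_mul_le) (by simp), by simp⟩
      omega
    -- E⟮x⟯ = ⊤
    have htop : E⟮x⟯ = (⊤ : IntermediateField E K) := by
      apply IntermediateField.restrictScalars_injective F
      rw [IntermediateField.restrictScalars_top, hE, IntermediateField.adjoin_adjoin_left]
      rw [eq_top_iff, ← IntermediateField.adjoin_root_eq_top (K := F) g]
      exact IntermediateField.adjoin.mono _ _ _ (by intro t ht; simp at ht; simp [ht]; exact Or.inl rfl)
    have := IntermediateField.adjoin.finrank (IsIntegral.of_finite E x)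
    rw [htop, IntermediateField.finrank_top'] at this
    omega
  have hq1 : 1 ≤ Module.finrank E K := Module.finrank_pos
  have htower : Module.finrank F E * Module.finrank E K = Module.finrank F K :=
    Module.finrank_mul_finrank F E K
  have hgdeg : g.natDegree = Module.finrank F K := by
    rw [(AdjoinRoot.powerBasis hg.ne_zero).finrank]
    rfl
  rw [hgdeg, ← htower, hEfin]
  interval_cases h : Module.finrank E K
  · left; ring
  · right; ring
end Aux

/-- For `f` irreducible monic of degree `n` over `F_{2^s}` and `α ≠ 0`, the transform
`f^{(Q,α)}` is either irreducible monic of degree `2n`, or a product of two irreducible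
monic polynomials of degree `n`. -/
theorem stmt_7 {F : Type*} [Field F] [Fintype F] (s n : ℕ) (hs : 1 ≤ s) (hn : 1 ≤ n)
    (hcard : Fintype.card F = 2 ^ s) (f : Polynomial F) (hdeg : f.natDegree = n)
    (hmonic : f.Monic) (hirr : Irreducible f) (α : F) (hα : α ≠ 0) :
    ((Qtrans f α).Monic ∧ Irreducible (Qtrans f α) ∧ (Qtrans f α).natDegree = 2 * n) ∨
      (∃ g₁ g₂ : Polynomial F, g₁.Monic ∧ Irreducible g₁ ∧ g₁.natDegree = n ∧
        g₂.Monic ∧ Irreducible g₂ ∧ g₂.natDegree = n ∧ Qtrans f α = g₁ * g₂) := by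
  have hQm : (Qtrans f α).Monic := qtrans_monic f hmonic α
  have hQd : (Qtrans f α).natDegree = 2 * n := by rw [qtrans_natDegree f hmonic α, hdeg]
  have hQne : Qtrans f α ≠ 0 := hQm.ne_zero
  have hQnotunit : ¬IsUnit (Qtrans f α) := by
    intro h
    have := natDegree_eq_zero_of_isUnit h
    omega
  obtain ⟨g₁, hg₁m, hg₁irr, hg₁dvd⟩ := (Qtrans f α).exists_monic_irreducible_factor hQnotunit
  obtain ⟨g₂, hfact⟩ := hg₁dvd
  have hg₁ne : g₁ ≠ 0 := hg₁m.ne_zero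
  have hg₂ne : g₂ ≠ 0 := by rintro rfl; simp at hfact; exact hQne hfact
  have hg₂m : g₂.Monic := by
    have := hQm
    rw [hfact] at this
    unfold Polynomial.Monic at this ⊢
    rwa [leadingCoeff_mul, hg₁m.leadingCoeff, one_mul] at this
  have hdegsum : g₁.natDegree + g₂.natDegree = 2 * n := by
    rw [← hQd, hfact, natDegree_mul hg₁ne hg₂ne]
  rcases qtrans_factor_degree hn hdeg hmonic hirr hα hg₁irr ⟨g₂, hfact⟩ with h1 | h1
  · -- g₁ has degree n, so g₂ has degree n; show g₂ irreducible
    right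
    have hg₂d : g₂.natDegree = n := by omega
    have hg₂notunit : ¬IsUnit g₂ := by
      intro h
      have := natDegree_eq_zero_of_isUnit h
      omega
    obtain ⟨h, hhm, hhirr, hhdvd⟩ := g₂.exists_monic_irreducible_factor hg₂notunit
    have hhdvdQ : h ∣ Qtrans f α := hhdvd.trans ⟨g₁, by rw [hfact, mul_comm]⟩
    have hhd : h.natDegree = n := by
      rcases qtrans_factor_degree hn hdeg hmonic hirr hα hhirr hhdvdQ with h2 | h2
      · exact h2
      · exfalso
        have := natDegree_le_of_dvd hhdvd hg₂ne
        omega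
    -- h monic degree n divides g₂ monic degree n : then g₂ = h
    obtain ⟨c, hc⟩ := hhdvd
    have hcne : c ≠ 0 := by rintro rfl; simp at hc; exact hg₂ne hc
    have hcd : c.natDegree = 0 := by
      have := hg₂d
      rw [hc, natDegree_mul hhm.ne_zero hcne] at this
      omega
    have hcm : c.Monic := by
      have := hg₂m
      unfold Polynomial.Monic at this ⊢
      rw [hc, leadingCoeff_mul, hhm.leadingCoeff, one_mul] at this
      exact this
    have hc1 : c = 1 := hcm.natDegree_eq_zero.mp hcd
    rw [hc1, mul_one] at hc
    exact ⟨g₁, g₂, hg₁m, hg₁irr, h1, hg₂m, hc ▸ hhirr, hg₂d, hfact⟩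
  · -- g₁ has degree 2n, so g₂ is a unit and Qtrans = g₁
    left
    have hg₂d : g₂.natDegree = 0 := by omega
    have hg₂1 : g₂ = 1 := hg₂m.natDegree_eq_zero.mp hg₂d
    rw [hg₂1, mul_one] at hfact
    exact ⟨hQm, hfact ▸ hg₁irr, hQd⟩
end

section
/- Let f be an irreducible monic polynomial of degree n over F_{2^s}, α ∈ F_{2^s}*, β ∈ F_{2^{sn}} a root of f, and γ a root of x² + βx + α = 0. If γ ∉ F_{2^{sn}} (so γ ∈ F_{2^{2sn}} \ F_{2^{sn}}), then f^{(Q,α)} is irreducible of degree 2n over F_{2^s}. -/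
open Polynomial

/-- If `β ∈ F_{2^{sn}}` is a root of the irreducible monic `f` and `γ` solves
`γ² + βγ + α = 0` with `γ ∉ F_{2^{sn}}`, then `f^{(Q,α)}` is irreducible of degree `2n`. -/
theorem stmt_8 {F : Type*} [Field F] [Fintype F] (s n : ℕ) (hs : 1 ≤ s) (hn : 1 ≤ n)
    (hcard : Fintype.card F = 2 ^ s) (f : Polynomial F) (hdeg : f.natDegree = n)
    (hmonic : f.Monic) (hirr : Irreducible f) (α : F) (hα : α ≠ 0)
    (β : AlgebraicClosure F) (hβroot : aeval β f = 0)
    (γ : AlgebraicClosure F)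
    (hγ : γ ^ 2 + β * γ + algebraMap F (AlgebraicClosure F) α = 0)
    (hγnot : γ ^ 2 ^ (s * n) ≠ γ) :
    Irreducible (Qtrans f α) ∧ (Qtrans f α).natDegree = 2 * n := by
  -- characteristic 2
  haveI : Fact (Nat.Prime 2) := ⟨Nat.prime_two⟩
  haveI hcharF : CharP F 2 := by
    have hprime : (ringChar F).Prime := CharP.char_is_prime F (ringChar F)
    have h2 : (2 : ℕ) ∣ ringChar F := by
      rw [prime_dvd_char_iff_dvd_card, hcard]
      exact dvd_pow_self 2 (by omega)
    have : ringChar F = 2 := ((Nat.prime_dvd_prime_iff_eq Nat.prime_two hprime).mp h2).symm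
    rw [← this]; exact ringChar.charP F
  haveI hcharK : CharP (AlgebraicClosure F) 2 := charP_of_injective_algebraMap (algebraMap F (AlgebraicClosure F)).injective 2
  -- γ ≠ 0
  have hγ0 : γ ≠ 0 := by
    intro h
    rw [h] at hγ
    rw [show (0:AlgebraicClosure F)^2 + β*0 + algebraMap F (AlgebraicClosure F) α
      = algebraMap F (AlgebraicClosure F) α from by ring] at hγ
    exact hα ((_root_.map_eq_zero _).mp hγ)
  -- key identity
  have key : γ ^ 2 + (algebraMap F (AlgebraicClosure F) α) = β * γ := by
    have h2 : β * γ + β * γ = 0 := CharTwo.add_self_eq_zero _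
    linear_combination hγ - h2
  -- γ is a root of Qtrans f α
  have hQroot : aeval γ (Qtrans f α) = 0 := by
    have : aeval γ (Qtrans f α) = γ ^ n * aeval β f := by
      rw [Qtrans, map_sum, aeval_eq_sum_range, hdeg, Finset.mul_sum]
      refine Finset.sum_congr rfl fun u hu => ?_
      have hun : u ≤ n := by simpa [Nat.lt_succ_iff] using hu
      simp only [map_mul, map_pow, aeval_C, aeval_X, map_add, key, Algebra.smul_def]
      rw [mul_pow]
      calc algebraMap F (AlgebraicClosure F) (f.coeff u) * γ ^ (n - u) * (β ^ u * γ ^ u)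
          = algebraMap F (AlgebraicClosure F) (f.coeff u) * β ^ u * (γ ^ (n - u) * γ ^ u) := by ring
        _ = γ ^ n * (algebraMap F (AlgebraicClosure F) (f.coeff u) * β ^ u) := by
            rw [pow_sub_mul_pow γ hun]; ring
    rw [this, hβroot, mul_zero]
  -- monicity and degree
  have hP2 : ((X : F[X]) ^ 2 + C α).Monic := by
    apply (monic_X_pow 2).add_of_left
    exact lt_of_le_of_lt (degree_C_le) (by rw [degree_X_pow]; exact_mod_cast Nat.zero_lt_two)
  have hP2deg : ((X : F[X]) ^ 2 + C α).natDegree = 2 := natDegree_X_pow_add_C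
  have hPn : (((X : F[X]) ^ 2 + C α) ^ n).Monic := hP2.pow n
  have hPndeg : (((X : F[X]) ^ 2 + C α) ^ n).natDegree = 2 * n := by
    rw [hP2.natDegree_pow, hP2deg, Nat.mul_comm]
  have hsplit : Qtrans f α =
      (∑ u ∈ Finset.range n, C (f.coeff u) * X ^ (n - u) * ((X : F[X]) ^ 2 + C α) ^ u)
        + ((X : F[X]) ^ 2 + C α) ^ n := by
    rw [Qtrans, hdeg, Finset.sum_range_succ]
    congr 1
    rw [show f.coeff n = 1 from hdeg ▸ hmonic.coeff_natDegree]
    simp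
  have hrest : (∑ u ∈ Finset.range n, C (f.coeff u) * X ^ (n - u) * ((X : F[X]) ^ 2 + C α) ^ u).degree
      < ((2 * n : ℕ) : WithBot ℕ) := by
    refine lt_of_le_of_lt (degree_sum_le _ _) ?_
    rw [Finset.sup_lt_iff (by exact_mod_cast WithBot.bot_lt_coe _)]
    intro u hu
    have hun : u < n := Finset.mem_range.mp hu
    refine lt_of_le_of_lt (degree_le_natDegree) ?_
    have h1 : (C (f.coeff u) * X ^ (n - u) * ((X : F[X]) ^ 2 + C α) ^ u).natDegree
        ≤ n + u := by
      have hmul := natDegree_mul_le (p := C (f.coeff u) * X ^ (n - u))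
        (q := ((X : F[X]) ^ 2 + C α) ^ u)
      have ha : (C (f.coeff u) * X ^ (n - u)).natDegree ≤ n - u := by
        refine le_trans (natDegree_mul_le) ?_
        simp [natDegree_C, natDegree_X_pow]
      have hb : (((X : F[X]) ^ 2 + C α) ^ u).natDegree ≤ 2 * u := by
        refine le_trans (natDegree_pow_le) ?_
        rw [hP2deg]; omega
      omega
    calc ((C (f.coeff u) * X ^ (n - u) * ((X : F[X]) ^ 2 + C α) ^ u).natDegree : WithBot ℕ)
        ≤ ((n + u : ℕ) : WithBot ℕ) := Nat.cast_le.mpr h1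
      _ < ((2 * n : ℕ) : WithBot ℕ) := Nat.cast_lt.mpr (show n + u < 2 * n by omega)
  have hPndeg' : (((X : F[X]) ^ 2 + C α) ^ n).degree = (2 * n : ℕ) := by
    rw [degree_eq_natDegree hPn.ne_zero, hPndeg]
  have hQdeg : (Qtrans f α).natDegree = 2 * n := by
    apply natDegree_eq_of_degree_eq_some
    rw [hsplit, degree_add_eq_right_of_degree_lt (hPndeg' ▸ hrest), hPndeg']
  have hQmonic : (Qtrans f α).Monic := by
    rw [hsplit]
    exact hPn.add_of_right (hPndeg' ▸ hrest)
  -- integrality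
  have hγint : IsIntegral F γ := isAlgebraic_iff_isIntegral.mp (Algebra.IsAlgebraic.isAlgebraic γ)
  -- β ∈ F⟮γ⟯
  have hβeq : β = γ + (algebraMap F (AlgebraicClosure F) α) * γ⁻¹ := by
    field_simp
    linear_combination -key
  set E := IntermediateField.adjoin F {γ} with hE
  have hγE : γ ∈ E := IntermediateField.mem_adjoin_simple_self F γ
  have hβE : β ∈ E := by
    rw [hβeq]
    exact E.add_mem hγE (E.mul_mem (E.algebraMap_mem α) (E.inv_mem hγE))
  haveI : FiniteDimensional F E := IntermediateField.adjoin.finiteDimensional hγint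
  set d := (minpoly F γ).natDegree with hd
  have hfr : Module.finrank F E = d := IntermediateField.adjoin.finrank hγint
  -- n ∣ d
  have hmin_β : minpoly F β = f := (minpoly.eq_of_irreducible_of_monic hirr hβroot hmonic).symm
  have hnd : n ∣ d := by
    have hint : IsIntegral F (⟨β, hβE⟩ : E) := IsIntegral.of_finite F _
    have := minpoly.degree_dvd hint
    rwa [IntermediateField.minpoly_eq, hfr, show ((⟨β, hβE⟩ : E) : AlgebraicClosure F) = β from rfl,
      hmin_β, hdeg] at this
  -- d ≤ 2n
  have hdvdQ : minpoly F γ ∣ Qtrans f α := minpoly.dvd F γ hQroot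
  have hd2n : d ≤ 2 * n := hQdeg ▸ natDegree_le_of_dvd hdvdQ hQmonic.ne_zero
  have hdpos : 0 < d := minpoly.natDegree_pos hγint
  -- d ≠ n
  have hdn : d ≠ n := by
    intro h
    haveI : Finite E := Module.finite_of_finite F
    haveI : Fintype E := Fintype.ofFinite E
    have hcardE : Fintype.card E = 2 ^ (s * n) := by
      rw [Module.card_eq_pow_finrank (K := F) (V := E), hcard, hfr, h, ← pow_mul]
    have := FiniteField.pow_card (⟨γ, hγE⟩ : E)
    rw [hcardE] at this
    apply hγnot
    have := congrArg (Subtype.val) this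
    push_cast at this
    exact this
  have hdeq : d = 2 * n := by
    obtain ⟨k, hk⟩ := hnd
    rcases Nat.lt_or_ge k 3 with h3 | h3
    · interval_cases k <;> omega
    · nlinarith
  -- Qtrans = minpoly
  obtain ⟨c, hc⟩ := hdvdQ
  have hcne : c ≠ 0 := by
    intro h; rw [h, mul_zero] at hc; exact hQmonic.ne_zero hc
  have hcd : c.natDegree = 0 := by
    have := hc ▸ hQdeg
    rw [natDegree_mul (minpoly.ne_zero hγint) hcne] at this
    omega
  have hc1 : c = 1 := by
    have hlc : c.coeff 0 = 1 := by
      have := congrArg leadingCoeff hc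
      rw [hQmonic.leadingCoeff, leadingCoeff_mul, (minpoly.monic hγint).leadingCoeff, one_mul,
        leadingCoeff, hcd] at this
      exact this.symm
    rw [eq_C_of_natDegree_eq_zero hcd, hlc, map_one]
  have hQeq : Qtrans f α = minpoly F γ := by rw [hc, hc1, mul_one]
  exact ⟨hQeq ▸ minpoly.irreducible hγint, hQdeg⟩
end

section
/- Let f be an irreducible monic polynomial of degree n over F_{2^s} and α ∈ F_{2^s}*. If f^{(Q,α)} splits over F_{2^s} as a product g₁ · g₂ of two irreducible monic polynomials of degree n, then at least one of g₁, g₂ has no θ_α-periodic roots. -/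
open Polynomial

/-- The map `θ_α` on `P¹(L) = L ∪ {∞}` (encoded as `Option L`, with `none = ∞`). -/
def theta {L : Type*} [Field L] [DecidableEq L] (α : L) : Option L → Option L
  | none => none
  | some x => if x = 0 then none else some (x + α * x⁻¹)

lemma theta_map_comm {L : Type*} [Field L] [DecidableEq L] (α : L) (σ : L →+* L)
    (hσ : σ α = α) (x : Option L) :
    Option.map σ (theta α x) = theta α (Option.map σ x) := by
  cases x with
  | none => rfl
  | some a =>
    by_cases h : a = 0
    · subst h; simp [theta]
    · have h' : σ a ≠ 0 := fun hh => h (σ.injective (by simpa using hh))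
      simp [theta, h, h', map_add, map_mul, map_inv₀, hσ]

lemma theta_iter_comm {L : Type*} [Field L] [DecidableEq L] (α : L) (σ : L →+* L)
    (hσ : σ α = α) (k : ℕ) (x : Option L) :
    Option.map σ ((theta α)^[k] x) = (theta α)^[k] (Option.map σ x) := by
  induction k with
  | zero => rfl
  | succ k ih =>
    rw [Function.iterate_succ_apply', Function.iterate_succ_apply',
      theta_map_comm α σ hσ, ih]

lemma aeval_Qtrans {F : Type*} [Field F] (f : Polynomial F) (α : F)
    {L : Type*} [Field L] [Algebra F L] (γ : L) (hγ : γ ≠ 0) :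
    aeval γ (Qtrans f α) =
      γ ^ f.natDegree * aeval (γ + algebraMap F L α * γ⁻¹) f := by
  set β := γ + algebraMap F L α * γ⁻¹ with hβ
  have key : γ ^ 2 + algebraMap F L α = γ * β := by
    rw [hβ]
    field_simp
  rw [Qtrans, map_sum, aeval_eq_sum_range (p := f) (x := β), Finset.mul_sum]
  refine Finset.sum_congr rfl fun u hu => ?_
  rw [Finset.mem_range, Nat.lt_succ_iff] at hu
  simp only [map_mul, map_pow, aeval_X, aeval_C, map_add]
  rw [key]
  have hpow : γ ^ (f.natDegree - u) * γ ^ u = γ ^ f.natDegree := by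
    rw [← pow_add, Nat.sub_add_cancel hu]
  calc (algebraMap F L) (f.coeff u) * γ ^ (f.natDegree - u) * (γ * β) ^ u
      = (algebraMap F L) (f.coeff u) * (γ ^ (f.natDegree - u) * γ ^ u) * β ^ u := by
        rw [mul_pow]; ring
    _ = γ ^ f.natDegree * ((algebraMap F L) (f.coeff u) * β ^ u) := by rw [hpow]; ring
    _ = γ ^ f.natDegree * (f.coeff u • β ^ u) := by rw [Algebra.smul_def]

/-- If `f^{(Q,α)}` splits into two irreducible monic degree-`n` factors, then at least
one factor has no `θ_α`-periodic roots (in the algebraic closure). -/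
theorem stmt_11 {F : Type*} [Field F] [Fintype F] [DecidableEq (AlgebraicClosure F)]
    (s n : ℕ) (hs : 1 ≤ s) (hn : 1 ≤ n) (hcard : Fintype.card F = 2 ^ s)
    (f : Polynomial F) (hdeg : f.natDegree = n) (hmonic : f.Monic) (hirr : Irreducible f)
    (α : F) (hα : α ≠ 0) (g₁ g₂ : Polynomial F)
    (hg₁ : g₁.Monic ∧ Irreducible g₁ ∧ g₁.natDegree = n)
    (hg₂ : g₂.Monic ∧ Irreducible g₂ ∧ g₂.natDegree = n)
    (hsplit : Qtrans f α = g₁ * g₂) :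
    (∀ γ : AlgebraicClosure F, aeval γ g₁ = 0 →
        ¬ ∃ k, 1 ≤ k ∧ (theta (algebraMap F (AlgebraicClosure F) α))^[k] (some γ) = some γ) ∨
      (∀ γ : AlgebraicClosure F, aeval γ g₂ = 0 →
        ¬ ∃ k, 1 ≤ k ∧ (theta (algebraMap F (AlgebraicClosure F) α))^[k] (some γ) = some γ) := by
  set α' : AlgebraicClosure F := algebraMap F (AlgebraicClosure F) α with hα'def
  by_contra hcon
  push_neg at hcon
  obtain ⟨⟨x₁, hx₁root, hx₁per⟩, ⟨x₂, hx₂root, hx₂per⟩⟩ := hcon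
  -- characteristic 2 facts
  have h2F : (2 : F) = 0 := by
    have hc : ((Fintype.card F : ℕ) : F) = 0 := FiniteField.cast_card_eq_zero F
    rw [hcard] at hc
    push_cast at hc
    exact (pow_eq_zero_iff (Nat.one_le_iff_ne_zero.mp hs)).mp hc
  have h2L : (2 : (AlgebraicClosure F)) = 0 := by
    rw [← map_ofNat (algebraMap F (AlgebraicClosure F)) 2, h2F, map_zero]
  have hadd : ∀ x : (AlgebraicClosure F), x + x = 0 := fun x => by rw [← two_mul, h2L, zero_mul]
  have hα'0 : α' ≠ 0 := by
    rw [hα'def]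
    exact fun h => hα ((map_eq_zero_iff _ (algebraMap F (AlgebraicClosure F)).injective).mp h)
  -- transfer of periodicity among roots of an irreducible polynomial
  have key : ∀ (g : Polynomial F), g.Monic → Irreducible g →
      ∀ x y : (AlgebraicClosure F), aeval x g = 0 → aeval y g = 0 →
      (∃ k, 1 ≤ k ∧ (theta α')^[k] (some x) = some x) →
      (∃ k, 1 ≤ k ∧ (theta α')^[k] (some y) = some y) := by
    rintro g hm hi x y hx hy ⟨k, hk1, hk⟩
    have hminy : minpoly F y = g := (minpoly.eq_of_irreducible_of_monic hi hy hm).symm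
    have halg : IsAlgebraic F y := Algebra.IsAlgebraic.isAlgebraic y
    obtain ⟨σ, hσ⟩ := minpoly.exists_algEquiv_of_root halg (hminy ▸ hx)
    refine ⟨k, hk1, ?_⟩
    have hσα : (σ : AlgebraicClosure F →+* AlgebraicClosure F) α' = α' := σ.commutes α
    have hcm := theta_iter_comm α' (σ : AlgebraicClosure F →+* AlgebraicClosure F) hσα k (some x)
    rw [hk] at hcm
    simp only [Option.map_some] at hcm
    have hσ' : (σ : AlgebraicClosure F →+* AlgebraicClosure F) x = y := hσ
    rw [hσ'] at hcm
    exact hcm.symm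
  -- a root β of f in L
  have hfdeg : f.degree ≠ 0 := by
    rw [degree_eq_natDegree hmonic.ne_zero, hdeg]
    exact_mod_cast Nat.one_le_iff_ne_zero.mp hn
  obtain ⟨β, hβ⟩ := IsAlgClosed.exists_aeval_eq_zero (AlgebraicClosure F) f hfdeg
  -- γ with γ² + βγ + α' = 0
  obtain ⟨γ, hγroot⟩ := IsAlgClosed.exists_root (C 1 * X ^ 2 + C β * X + C α') (by
    rw [degree_quadratic one_ne_zero]; norm_num)
  have hγeq : γ ^ 2 + β * γ + α' = 0 := by
    simpa [IsRoot] using hγroot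
  have hγ0 : γ ≠ 0 := by
    intro h
    rw [h] at hγeq
    simp at hγeq
    exact hα'0 hγeq
  -- θ(γ) = β
  have hα'eq : α' = γ ^ 2 + β * γ := by
    linear_combination hγeq - (γ ^ 2 + β * γ) * h2L
  have hfrac : α' * γ⁻¹ = γ + β := by
    rw [hα'eq]
    field_simp
  have hθγval : γ + α' * γ⁻¹ = β := by
    rw [hfrac]
    linear_combination γ * h2L
  set γ' := α' * γ⁻¹ with hγ'def
  have hγ'0 : γ' ≠ 0 := mul_ne_zero hα'0 (inv_ne_zero hγ0)
  have hinv : α' * γ'⁻¹ = γ := by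
    rw [hγ'def]
    field_simp
  have hθγ'val : γ' + α' * γ'⁻¹ = β := by
    rw [hinv]
    linear_combination hfrac + γ * h2L
  -- roots of the quadratic fiber are roots of g₁ or g₂
  have hQ : ∀ δ : (AlgebraicClosure F), δ ≠ 0 → δ + α' * δ⁻¹ = β → (aeval δ g₁ = 0 ∨ aeval δ g₂ = 0) := by
    intro δ hδ hδβ
    have hq : aeval δ (Qtrans f α) = 0 := by
      rw [aeval_Qtrans f α δ hδ, ← hα'def, hδβ, hβ, mul_zero]
    rw [hsplit, map_mul] at hq
    exact mul_eq_zero.mp hq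
  have hper : ∀ δ : (AlgebraicClosure F), (aeval δ g₁ = 0 ∨ aeval δ g₂ = 0) →
      ∃ k, 1 ≤ k ∧ (theta α')^[k] (some δ) = some δ := by
    rintro δ (h | h)
    · exact key g₁ hg₁.1 hg₁.2.1 x₁ δ hx₁root h hx₁per
    · exact key g₂ hg₂.1 hg₂.2.1 x₂ δ hx₂root h hx₂per
  obtain ⟨k₁, hk₁, hp₁⟩ := hper γ (hQ γ hγ0 hθγval)
  obtain ⟨k₂, hk₂, hp₂⟩ := hper γ' (hQ γ' hγ'0 hθγ'val)
  -- common period K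
  have hpγ : (theta α')^[k₁ * k₂] (some γ) = some γ := by
    rw [Function.iterate_mul]
    exact Function.iterate_fixed hp₁ k₂
  have hpγ' : (theta α')^[k₁ * k₂] (some γ') = some γ' := by
    rw [mul_comm, Function.iterate_mul]
    exact Function.iterate_fixed hp₂ k₁
  have hθγ : theta α' (some γ) = some β := by
    simp [theta, hγ0, hθγval]
    exact hθγval
  have hθγ'2 : theta α' (some γ') = some β := by
    simp [theta, hγ'0, hθγ'val]
  obtain ⟨K', hK'⟩ : ∃ K', k₁ * k₂ = K' + 1 :=
    ⟨k₁ * k₂ - 1, by have := Nat.mul_le_mul hk₁ hk₂; omega⟩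
  have hγγ' : γ = γ' := by
    have e1 : (theta α')^[k₁ * k₂] (some γ) = (theta α')^[K'] (some β) := by
      rw [hK', Function.iterate_succ_apply, hθγ]
    have e2 : (theta α')^[k₁ * k₂] (some γ') = (theta α')^[K'] (some β) := by
      rw [hK', Function.iterate_succ_apply, hθγ'2]
    have := (hpγ.symm.trans (e1.trans e2.symm)).trans hpγ'
    exact Option.some_injective _ this
  have hβ0 : β = 0 := by
    rw [← hθγval, ← hγγ']
    exact hadd γ
  have hθβ : theta α' (some β) = none := by
    simp [theta, hβ0]
  cases K' with
  | zero =>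
    have : some γ = some β := by
      rw [← hpγ, hK']
      simpa using hθγ
    have : γ = β := Option.some_injective _ this
    exact hγ0 (this.trans hβ0)
  | succ K'' =>
    have hnone : (theta α')^[K''] (none : Option (AlgebraicClosure F)) = none :=
      Function.iterate_fixed rfl K''
    have : (none : Option (AlgebraicClosure F)) = some γ := by
      rw [← hpγ, hK', Function.iterate_succ_apply, hθγ,
        Function.iterate_succ_apply, hθβ, hnone]
    exact Option.some_ne_none γ this.symm
end
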